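/- One-step error propagation of the rounded Euler method: Assume p ≥ n + 8L + M. Let T be a natural number with T < 2^p, and let ṽ, w ∈ ℝ satisfy |ṽ − h(T/2^p)| ≤ 2^(−n)·exp(4L(T/2^p − 1)) and |w − g(T/2^p, ṽ)| ≤ 2^(−(n+8L)). Then for every Δ ∈ [0, 2^(−p)], one has |(ṽ + Δ·w) − h(T/2^p + Δ)| ≤ 2^(−n)·exp(4L(T/2^p + Δ − 1)). -/

import Mathlib

/-!
Write `t₀ = T/2^p`, `ε = 2^(-n) exp(4L(t₀ - 1))` and `η = 2^(-(n+8L))`. The error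
`s ↦ ṽ + (s - t₀) w - h s` has derivative `w - g(s, h s)`, and on `[t₀, t₀ + 2^(-p)]`
this defect is at most `η + Lε + η + Lη ≤ 4Lε`: compare `w` with `g(t₀, ṽ)`, move
`ṽ` to `h t₀` (Lipschitz), `t₀` to `s` (time modulus), and `h t₀` to `h s` (`h` is
`2^M`-Lipschitz and `2^M 2^(-p) ≤ η`); the bound `η ≤ ε` holds because
`2^(-8L) ≤ e^(-4L)`. By the mean value inequality the error grows by at most `4LεΔ`,
and `ε (1 + 4LΔ) ≤ ε exp(4LΔ)`.
-/

open Real Set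

theorem abs_add_mul_sub_le_of_hasDerivAt {h f : ℝ → ℝ} {t Δ C : ℝ} (v w : ℝ)
    (hΔ : 0 ≤ Δ) (hh : ∀ s ∈ Icc t (t + Δ), HasDerivAt h (f s) s)
    (hf : ∀ s ∈ Icc t (t + Δ), |w - f s| ≤ C) :
    |(v + Δ * w) - h (t + Δ)| ≤ |v - h t| + C * Δ := by
  have hφ : |((t + Δ) * w - h (t + Δ)) - (t * w - h t)| ≤ C * |t + Δ - t| :=
    Convex.norm_image_sub_le_of_norm_hasDerivWithin_le
      (fun s hs => (((hasDerivAt_id s).mul_const w).sub (hh s hs)).hasDerivWithinAt.congr_deriv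
        (by simp))
      hf (convex_Icc _ _) (left_mem_Icc.2 (by linarith)) (right_mem_Icc.2 (by linarith))
  rw [add_sub_cancel_left, abs_of_nonneg hΔ] at hφ
  calc |(v + Δ * w) - h (t + Δ)|
        = |(v - h t) + (((t + Δ) * w - h (t + Δ)) - (t * w - h t))| := by ring_nf
    _ ≤ |v - h t| + C * Δ := (abs_add_le _ _).trans (by gcongr)

theorem abs_sub_apply_le_of_lipschitz {g : ℝ → ℝ → ℝ} {L t s : ℝ}
    (hlip_t : ∀ y₀ y₁, |g t y₀ - g t y₁| ≤ L * |y₀ - y₁|)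
    (hlip_s : ∀ y₀ y₁, |g s y₀ - g s y₁| ≤ L * |y₀ - y₁|) (w v y z : ℝ) :
    |w - g s z| ≤ |w - g t v| + L * |v - y| + |g t y - g s y| + L * |y - z| := by
  calc |w - g s z|
        = |(w - g t v) + (g t v - g t y) + (g t y - g s y) + (g s y - g s z)| := by ring_nf
    _ ≤ |w - g t v| + |g t v - g t y| + |g t y - g s y| + |g s y - g s z| := by
        grw [abs_add_le, abs_add_le, abs_add_le]
    _ ≤ _ := by gcongr <;> apply_assumption

theorem two_zpow_neg_two_mul_le_exp_neg (k : ℕ) : (2:ℝ) ^ (-(2 * k : ℤ)) ≤ exp (-k) := by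
  have h4 : (2:ℝ) ^ (2 * k : ℤ) = 4 ^ k := by
    rw [zpow_mul, zpow_natCast]; norm_num
  rw [zpow_neg, h4, exp_neg, ← exp_one_pow]
  gcongr
  linarith [exp_one_lt_d9]

theorem two_zpow_neg_add_le_mul_exp (n L : ℕ) {t : ℝ} (ht : 0 ≤ t) :
    (2:ℝ) ^ (-((n:ℤ) + 8 * L)) ≤ 2 ^ (-(n:ℤ)) * exp (4 * L * (t - 1)) := by
  rw [neg_add, zpow_add₀ two_ne_zero]
  gcongr
  calc (2:ℝ) ^ (-(8 * L : ℤ)) = 2 ^ (-(2 * (4 * L : ℕ) : ℤ)) := by push_cast; ring_nf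
    _ ≤ exp (-(4 * L : ℕ)) := two_zpow_neg_two_mul_le_exp_neg _
    _ ≤ exp (4 * L * (t - 1)) := by
      gcongr
      push_cast
      nlinarith [mul_nonneg (Nat.cast_nonneg (α := ℝ) L) ht]

theorem two_pow_mul_two_zpow_neg_le {m p : ℕ} {k : ℤ} (h : k + m ≤ p) :
    (2:ℝ) ^ m * 2 ^ (-(p:ℤ)) ≤ 2 ^ (-k) := by
  rw [← zpow_natCast, ← zpow_add₀ two_ne_zero]
  exact zpow_le_zpow_right₀ one_le_two (by omega)

theorem div_two_pow_add_le_one {T p : ℕ} {Δ : ℝ} (hT : T < 2 ^ p)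
    (hΔ : Δ ≤ 2 ^ (-(p:ℤ))) :
    (T : ℝ) / 2 ^ p + Δ ≤ 1 := by
  have hT' : (T : ℝ) + 1 ≤ 2 ^ p := by exact_mod_cast hT
  rw [zpow_neg, zpow_natCast] at hΔ
  calc (T : ℝ) / 2 ^ p + Δ ≤ ((T : ℝ) + 1) / 2 ^ p := by rw [add_div, one_div]; linarith
    _ ≤ 1 := div_le_one_of_le₀ hT' (by positivity)

theorem euler_method_one_step_error_general
    (L M n p : ℕ) (hL : 1 ≤ L)
    (g : ℝ → ℝ → ℝ) (h : ℝ → ℝ)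
    (hg_lip : ∀ t ∈ Icc (0:ℝ) 1, ∀ y₀ y₁ : ℝ,
      |g t y₀ - g t y₁| ≤ (L : ℝ) * |y₀ - y₁|)
    (hg_bd : ∀ t ∈ Icc (0:ℝ) 1, ∀ y : ℝ, |g t y| ≤ 2 ^ M)
    (hg_mod : ∀ t ∈ Icc (0:ℝ) 1, ∀ t' ∈ Icc (0:ℝ) 1, |t - t'| ≤ (2:ℝ) ^ (-(p:ℤ)) →
      ∀ y : ℝ, |g t y - g t' y| ≤ (2:ℝ) ^ (-((n:ℤ) + 8 * L)))
    (hh : ∀ t ∈ Icc (0:ℝ) 1, HasDerivAt h (g t (h t)) t)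
    (hp : n + 8 * L + M ≤ p)
    (T : ℕ) (hT : T < 2 ^ p) (vtil w : ℝ)
    (hv : |vtil - h ((T : ℝ) / 2 ^ p)| ≤
      (2:ℝ) ^ (-(n:ℤ)) * Real.exp (4 * (L : ℝ) * ((T : ℝ) / 2 ^ p - 1)))
    (hw : |w - g ((T : ℝ) / 2 ^ p) vtil| ≤ (2:ℝ) ^ (-((n:ℤ) + 8 * L))) :
    ∀ Δ ∈ Icc (0:ℝ) ((2:ℝ) ^ (-(p:ℤ))),
      |(vtil + Δ * w) - h ((T : ℝ) / 2 ^ p + Δ)| ≤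
        (2:ℝ) ^ (-(n:ℤ)) * Real.exp (4 * (L : ℝ) * ((T : ℝ) / 2 ^ p + Δ - 1)) := by
  rintro Δ ⟨hΔ0, hΔp⟩
  set t₀ : ℝ := (T : ℝ) / 2 ^ p
  set ε : ℝ := (2:ℝ) ^ (-(n:ℤ)) * exp (4 * L * (t₀ - 1))
  set η : ℝ := (2:ℝ) ^ (-((n:ℤ) + 8 * L))
  have hsub : Icc t₀ (t₀ + Δ) ⊆ Icc 0 1 :=
    Icc_subset_Icc (by positivity) (div_two_pow_add_le_one hT hΔp)
  have ht₀ : t₀ ∈ Icc 0 1 := hsub (left_mem_Icc.2 (by linarith))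
  have hηε : η ≤ ε := two_zpow_neg_add_le_mul_exp n L ht₀.1
  have hnear : ∀ s ∈ Icc t₀ (t₀ + Δ), |t₀ - s| ≤ 2 ^ (-(p:ℤ)) := fun s hs => by
    rw [abs_sub_comm, abs_of_nonneg (by linarith [hs.1])]; linarith [hs.2]
  have hh_near : ∀ s ∈ Icc t₀ (t₀ + Δ), |h t₀ - h s| ≤ η := fun s hs =>
    calc |h t₀ - h s| ≤ 2 ^ M * |t₀ - s| :=
          Convex.norm_image_sub_le_of_norm_hasDerivWithin_le
            (fun x hx => (hh x (hsub hx)).hasDerivWithinAt)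
            (fun x hx => hg_bd x (hsub hx) (h x))
            (convex_Icc _ _) hs (left_mem_Icc.2 (by linarith))
      _ ≤ 2 ^ M * 2 ^ (-(p:ℤ)) := by gcongr; exact hnear s hs
      _ ≤ η := two_pow_mul_two_zpow_neg_le (by exact_mod_cast hp)
  have hdefect : ∀ s ∈ Icc t₀ (t₀ + Δ), |w - g s (h s)| ≤ 4 * L * ε := fun s hs =>
    calc |w - g s (h s)|
        ≤ |w - g t₀ vtil| + L * |vtil - h t₀| + |g t₀ (h t₀) - g s (h t₀)|
            + L * |h t₀ - h s| :=
          abs_sub_apply_le_of_lipschitz (hg_lip t₀ ht₀) (hg_lip s (hsub hs)) _ _ _ _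
      _ ≤ η + L * ε + η + L * η := by
          gcongr
          exacts [hg_mod _ ht₀ _ (hsub hs) (hnear s hs) _, hh_near s hs]
      _ ≤ 4 * L * ε := by
          have hL' : (1:ℝ) ≤ L := by exact_mod_cast hL
          have hε : ε ≤ L * ε := le_mul_of_one_le_left (hηε.trans' (by positivity)) hL'
          have hLη : L * η ≤ L * ε := by gcongr
          linarith
  calc |(vtil + Δ * w) - h (t₀ + Δ)| ≤ |vtil - h t₀| + 4 * L * ε * Δ :=
        abs_add_mul_sub_le_of_hasDerivAt vtil w hΔ0 (fun s hs => hh s (hsub hs)) hdefect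
    _ ≤ ε * (1 + 4 * L * Δ) := by linarith
    _ ≤ ε * exp (4 * L * Δ) := by gcongr; linarith [add_one_le_exp (4 * L * Δ)]
    _ = _ := by rw [mul_assoc, ← exp_add]; ring_nf

/-- One-step error propagation of the rounded Euler method. -/
theorem euler_method_one_step_error
    (L M n p : ℕ) (hL : 1 ≤ L)
    (g : ℝ → ℝ → ℝ) (h : ℝ → ℝ)
    (hg_cont : Continuous fun q : ℝ × ℝ => g q.1 q.2)
    (hg_lip : ∀ t ∈ Icc (0:ℝ) 1, ∀ y₀ y₁ : ℝ,
      |g t y₀ - g t y₁| ≤ (L : ℝ) * |y₀ - y₁|)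
    (hg_bd : ∀ t ∈ Icc (0:ℝ) 1, ∀ y : ℝ, |g t y| ≤ 2 ^ M)
    (hg_mod : ∀ t ∈ Icc (0:ℝ) 1, ∀ t' ∈ Icc (0:ℝ) 1, |t - t'| ≤ (2:ℝ) ^ (-(p:ℤ)) →
      ∀ y : ℝ, |g t y - g t' y| ≤ (2:ℝ) ^ (-((n:ℤ) + 8 * L)))
    (hh0 : h 0 = 0)
    (hh : ∀ t ∈ Icc (0:ℝ) 1, HasDerivAt h (g t (h t)) t)
    (hp : n + 8 * L + M ≤ p)
    (T : ℕ) (hT : T < 2 ^ p) (vtil w : ℝ)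
    (hv : |vtil - h ((T : ℝ) / 2 ^ p)| ≤
      (2:ℝ) ^ (-(n:ℤ)) * Real.exp (4 * (L : ℝ) * ((T : ℝ) / 2 ^ p - 1)))
    (hw : |w - g ((T : ℝ) / 2 ^ p) vtil| ≤ (2:ℝ) ^ (-((n:ℤ) + 8 * L))) :
    ∀ Δ ∈ Icc (0:ℝ) ((2:ℝ) ^ (-(p:ℤ))),
      |(vtil + Δ * w) - h ((T : ℝ) / 2 ^ p + Δ)| ≤
        (2:ℝ) ^ (-(n:ℤ)) * Real.exp (4 * (L : ℝ) * ((T : ℝ) / 2 ^ p + Δ - 1)) :=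
  euler_method_one_step_error_general L M n p hL g h hg_lip hg_bd hg_mod hh hp T hT vtil w hv hw
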